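/- arXiv:1412.7429 — 7 statements merged into one kernel-verified Lean document; each statement's English description precedes it below -/
import Mathlib

section
/- Let E0, A, μ0, g1, g2 be real numbers with A ≠ 0 and (g1 − g2)² ≤ 4A², and let φ = arcsin((g1 − g2)/(2A)) ∈ ℝ. Then the eigenvectors u₊ = (e^{−iφ/2}, e^{iφ/2}) and u₋ = (−e^{iφ/2}, e^{−iφ/2}) of L satisfy ⟨u₊, u₋⟩ = i(g2 − g1)/A. In particular, u₊ and u₋ are orthogonal if and only if g1 = g2. -/
open Complex Matrix

/-! Conjugating `exp (± i φ / 2)` flips the sign of the exponent, so `⟨u₊, u₋⟩ = e^{-iφ} - e^{iφ}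
= -2 i sin φ`, and `sin φ = (g₁ - g₂)/(2A)` because the hypothesis keeps this ratio in `[-1, 1]`. -/

theorem conj_exp_half_inner_eq (φ : ℝ) :
    (starRingEnd ℂ) (exp (-I * φ / 2)) * -exp (I * φ / 2)
      + (starRingEnd ℂ) (exp (I * φ / 2)) * exp (-I * φ / 2) = -2 * I * sin φ := by
  simp only [← exp_conj, map_div₀, map_mul, map_neg, conj_I, conj_ofReal, map_ofNat, neg_neg,
    mul_neg, ← exp_add]
  rw [sin]
  ring_nf
  rw [I_sq]
  ring

theorem abs_div_le_one_of_sq_le_sq {a b : ℝ} (h : a ^ 2 ≤ b ^ 2) : |a / b| ≤ 1 := by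
  rw [abs_div]
  exact div_le_one_of_le₀ (sq_le_sq.mp h) (abs_nonneg b)

theorem div_eq_zero_iff_of_sq_le_sq {a b : ℝ} (h : a ^ 2 ≤ b ^ 2) : a / b = 0 ↔ a = 0 := by
  refine ⟨fun hab => ?_, fun ha => by rw [ha, zero_div]⟩
  rcases div_eq_zero_iff.mp hab with ha | rfl
  · exact ha
  · exact pow_eq_zero_iff two_ne_zero |>.mp (le_antisymm (by simpa using h) (sq_nonneg a))

theorem stmt_1_general (A g1 g2 : ℝ) (h : (g1 - g2) ^ 2 ≤ 4 * A ^ 2) :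
    let φ : ℝ := Real.arcsin ((g1 - g2) / (2 * A))
    let uP : Fin 2 → ℂ := ![Complex.exp (-Complex.I * (φ : ℂ) / 2),
      Complex.exp (Complex.I * (φ : ℂ) / 2)]
    let uM : Fin 2 → ℂ := ![-Complex.exp (Complex.I * (φ : ℂ) / 2),
      Complex.exp (-Complex.I * (φ : ℂ) / 2)]
    (starRingEnd ℂ) (uP 0) * uM 0 + (starRingEnd ℂ) (uP 1) * uM 1
      = Complex.I * ((g2 : ℂ) - g1) / A ∧
    ((starRingEnd ℂ) (uP 0) * uM 0 + (starRingEnd ℂ) (uP 1) * uM 1 = 0 ↔ g1 = g2) := by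
  intro φ uP uM
  have hsq : (g1 - g2) ^ 2 ≤ (2 * A) ^ 2 := by rwa [mul_pow, show (2 : ℝ) ^ 2 = 4 by norm_num]
  have hx := abs_le.mp (abs_div_le_one_of_sq_le_sq hsq)
  have hsin : Real.sin φ = (g1 - g2) / (2 * A) := Real.sin_arcsin hx.1 hx.2
  have hinner : (starRingEnd ℂ) (uP 0) * uM 0 + (starRingEnd ℂ) (uP 1) * uM 1
      = -2 * I * ((g1 - g2) / (2 * A) : ℝ) := by
    rw [← hsin, ofReal_sin]
    exact conj_exp_half_inner_eq φ
  rw [hinner]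
  refine ⟨by push_cast; ring, ?_⟩
  rw [mul_eq_zero, ofReal_eq_zero, div_eq_zero_iff_of_sq_le_sq hsq, sub_eq_zero]
  simp [I_ne_zero]

/-- For `φ = arcsin((g₁-g₂)/(2A))` the eigenvectors `u₊`, `u₋` of `L` satisfy
`⟨u₊, u₋⟩ = i (g₂ - g₁)/A`; in particular they are orthogonal iff `g₁ = g₂`. -/
theorem stmt_1 (E0 A μ0 g1 g2 : ℝ) (hA : A ≠ 0) (h : (g1 - g2) ^ 2 ≤ 4 * A ^ 2) :
    let φ : ℝ := Real.arcsin ((g1 - g2) / (2 * A))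
    let uP : Fin 2 → ℂ := ![Complex.exp (-Complex.I * (φ : ℂ) / 2),
      Complex.exp (Complex.I * (φ : ℂ) / 2)]
    let uM : Fin 2 → ℂ := ![-Complex.exp (Complex.I * (φ : ℂ) / 2),
      Complex.exp (-Complex.I * (φ : ℂ) / 2)]
    (starRingEnd ℂ) (uP 0) * uM 0 + (starRingEnd ℂ) (uP 1) * uM 1
      = Complex.I * ((g2 : ℂ) - g1) / A ∧
    ((starRingEnd ℂ) (uP 0) * uM 0 + (starRingEnd ℂ) (uP 1) * uM 1 = 0 ↔ g1 = g2) :=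
  stmt_1_general A g1 g2 h
end

section
/- Let E0, A, μ0, g1, g2, a be real numbers and let u : ℝ → ℂ² be differentiable and satisfy i·u'(t) = H u(t) + i(μ0·I + G) u(t) + a·diag(|u₁(t)|², |u₂(t)|²)·u(t) for all t. Then the squared norm N(t) = |u₁(t)|² + |u₂(t)|² satisfies the differential inequality N'(t) ≤ 2(μ0 − min(g1, g2))·N(t) for all t. -/
/-!
Since `N(t) = ‖u(t)‖²`, we have `N' = 2 Re ⟨u, u'⟩`. At each fixed time the linear coupling `H`
and the Kerr term `a · diag(|u₁|², |u₂|²)` together form a Hermitian matrix `K`, and the equation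
reads `u' = -i K u + (μ₀ + G) u`. The quadratic form of `K` is real, so `-i K u` contributes
nothing to `Re ⟨u, u'⟩`, leaving `N' = 2 ∑ⱼ (μ₀ - gⱼ) |uⱼ|² ≤ 2 (μ₀ - min(g₁, g₂)) N`.
-/

open Complex Matrix

section

variable {n : Type*} [Fintype n]

theorem hasDerivAt_sum_norm_sq {u : ℝ → n → ℂ} {u' : n → ℂ} {t : ℝ} (h : HasDerivAt u u' t) :
    HasDerivAt (fun s => ∑ j, ‖u s j‖ ^ 2) (2 * (star (u t) ⬝ᵥ u').re) t := by
  have := HasDerivAt.fun_sum (u := Finset.univ) fun j _ => (hasDerivAt_pi.mp h j).norm_sq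
  simpa [Finset.mul_sum, dotProduct, Complex.inner, mul_comm] using this

theorem re_star_dotProduct_eq_of_I_smul_eq {K M : Matrix n n ℂ} (hK : K.IsHermitian)
    {v w : n → ℂ} (h : I • w = K *ᵥ v + I • M *ᵥ v) :
    (star v ⬝ᵥ w).re = (star v ⬝ᵥ M *ᵥ v).re := by
  have hw : w = -I • K *ᵥ v + M *ᵥ v := by
    have := congrArg (-I • ·) h
    simpa [smul_add, smul_smul, add_comm] using this
  have hreal : (star v ⬝ᵥ K *ᵥ v).im = 0 := hK.im_star_dotProduct_mulVec_self v
  simp [hw, dotProduct_add, dotProduct_smul, hreal]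

theorem re_star_dotProduct_diagonal_mulVec [DecidableEq n] (d : n → ℝ) (v : n → ℂ) :
    (star v ⬝ᵥ diagonal (fun j => (d j : ℂ)) *ᵥ v).re = ∑ j, d j * ‖v j‖ ^ 2 := by
  simp [dotProduct, mulVec_diagonal, Complex.re_sum, mul_left_comm _ (d _ : ℂ),
    Complex.conj_mul', ← ofReal_pow]

end

/-- For solutions of the nonlinear two-level system, the squared norm
`N(t) = |u₁(t)|² + |u₂(t)|²` satisfies `N'(t) ≤ 2(μ₀ - min(g₁,g₂)) N(t)`. -/
theorem stmt_4 (E0 A μ0 g1 g2 a : ℝ)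
    (H : Matrix (Fin 2) (Fin 2) ℂ) (hH : H = !![(E0 : ℂ), (A : ℂ); (A : ℂ), (E0 : ℂ)])
    (G : Matrix (Fin 2) (Fin 2) ℂ) (hG : G = !![(-g1 : ℂ), 0; 0, (-g2 : ℂ)])
    (u u' : ℝ → Fin 2 → ℂ)
    (hderiv : ∀ t, HasDerivAt u (u' t) t)
    (heq : ∀ t, Complex.I • u' t =
      H.mulVec (u t)
      + Complex.I • (((μ0 : ℂ) • (1 : Matrix (Fin 2) (Fin 2) ℂ) + G).mulVec (u t))
      + (a : ℂ) • (Matrix.diagonal ![((‖u t 0‖ : ℂ))^2, ((‖u t 1‖ : ℂ))^2]).mulVec (u t)) :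
    ∀ t, deriv (fun s => ‖u s 0‖ ^ 2 + ‖u s 1‖ ^ 2) t
      ≤ 2 * (μ0 - min g1 g2) * (‖u t 0‖ ^ 2 + ‖u t 1‖ ^ 2) := by
  intro t
  set K := H + (a : ℂ) • diagonal ![((‖u t 0‖ : ℂ)) ^ 2, ((‖u t 1‖ : ℂ)) ^ 2]
  set M := (μ0 : ℂ) • (1 : Matrix (Fin 2) (Fin 2) ℂ) + G
  have hK : K.IsHermitian := by
    ext i j; fin_cases i <;> fin_cases j <;> simp [K, hH, ← ofReal_pow]
  have hM : M = diagonal (fun j => ((μ0 - ![g1, g2] j : ℝ) : ℂ)) := by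
    ext i j; fin_cases i <;> fin_cases j <;> simp [M, hG, sub_eq_add_neg]
  have hsystem : I • u' t = K *ᵥ u t + I • M *ᵥ u t := by
    rw [heq t, add_right_comm, add_mulVec H, smul_mulVec]
  have hN := (hasDerivAt_sum_norm_sq (hderiv t)).deriv
  simp only [Fin.sum_univ_two] at hN
  rw [hN, re_star_dotProduct_eq_of_I_smul_eq hK hsystem, hM, re_star_dotProduct_diagonal_mulVec,
    Fin.sum_univ_two]
  simp only [Matrix.cons_val_zero, Matrix.cons_val_one]
  nlinarith [min_le_left g1 g2, min_le_right g1 g2, sq_nonneg ‖u t 0‖, sq_nonneg ‖u t 1‖]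
end

section
/- Let E0, A, μ0, g1, g2, a be real numbers with A > 0, a > 0, g2 < μ0 < g1, and set X = √((g1 − μ0)(μ0 − g2))/A; assume X² < 1. Define r = √((μ0 − g2)/(g1 − g2)), x = √((g1 − μ0)/(g1 − g2)), φ = −arcsin(X), R² = ((g1 − g2)/a)·√(1/X² − 1), Ω = E0 + a·R², and u₀ = (r·e^{iφ}, x) ∈ ℂ². Then ‖u₀‖² = r² + x² = 1, Ω is real, and u₀ solves the nonlinear eigenvalue problem Ω·u₀ = L u₀ + a·R²·diag(|u₀₁|², |u₀₂|²)·u₀. -/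
/-!
Write `p = μ0 - g2`, `q = g1 - μ0`, `D = g1 - g2 = p + q` and `S = √(1 - X²)`. Then `r² = p / D`,
`x² = q / D`, `e^{iφ} = S - iX` and `a R² = D S / X`. Because `|u₀₁|² + |u₀₂|² = r² + x² = 1`, the
nonlinear eigenvalue problem with `Ω = E0 + a R²` reduces to `(a R² x² + i q) r e^{iφ} = A x` and
`(a R² r² - i p) x = A r e^{iφ}`. Here `a R² x² + i q = q (S + iX) / X` and
`a R² r² - i p = p e^{iφ} / X`, so both equations become the amplitude relations `q r = A x X` and
`p x = A r X`, which hold since `(A X)² = p q`.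
-/

open Complex Matrix

lemma Complex.exp_I_mul_neg_arcsin {X : ℝ} (h₁ : -1 ≤ X) (h₂ : X ≤ 1) :
    exp (I * ((-Real.arcsin X : ℝ) : ℂ)) = √(1 - X ^ 2) - X * I := by
  rw [mul_comm, exp_mul_I, ← ofReal_cos, ← ofReal_sin, Real.cos_neg, Real.sin_neg,
    Real.cos_arcsin, Real.sin_arcsin h₁ h₂]
  push_cast
  ring

lemma Real.sqrt_one_div_sq_sub_one {X : ℝ} (hX : 0 < X) :
    √(1 / X ^ 2 - 1) = √(1 - X ^ 2) / X := by
  rw [show 1 / X ^ 2 - 1 = (1 - X ^ 2) / X ^ 2 by field_simp, Real.sqrt_div' _ (by positivity),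
    Real.sqrt_sq hX.le]

lemma Real.sqrt_div_mul_sqrt_mul {p q : ℝ} (hp : 0 ≤ p) (hq : 0 ≤ q) (D : ℝ) :
    √(q / D) * √(q * p) = q * √(p / D) := by
  rw [← Real.sqrt_mul' _ (by positivity), show q / D * (q * p) = q ^ 2 * (p / D) by ring,
    Real.sqrt_mul (sq_nonneg q), Real.sqrt_sq hq]

lemma two_level_nonlinear_eigen_of_components {E0 A μ0 g1 g2 k r x : ℝ} {u : ℂ}
    (hrx : r ^ 2 + x ^ 2 = 1)
    (h₀ : (k * x ^ 2 + (g1 - μ0) * I) * u = A * x)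
    (h₁ : (k * r ^ 2 - (μ0 - g2) * I) * x = A * u) :
    ((E0 + k : ℝ) : ℂ) • ![u, (x : ℂ)] =
      (!![(E0 : ℂ), A; A, E0] + I • ((μ0 : ℂ) • (1 : Matrix (Fin 2) (Fin 2) ℂ) +
        !![(-g1 : ℂ), 0; 0, -g2])) *ᵥ ![u, (x : ℂ)] +
      (k : ℂ) • diagonal ![(r : ℂ) ^ 2, (x : ℂ) ^ 2] *ᵥ ![u, (x : ℂ)] := by
  have hrxC : (r : ℂ) ^ 2 + (x : ℂ) ^ 2 = 1 := by exact_mod_cast hrx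
  ext i
  fin_cases i <;>
    simp only [ofReal_add, Fin.zero_eta, Fin.mk_one, cons_val_zero, cons_val_one, smul_cons,
      mulVec_fin_two, Pi.add_apply, Matrix.add_apply, Matrix.smul_apply, of_apply, one_apply_eq,
      one_apply_ne, diagonal_apply_eq, diagonal_apply_ne, ne_eq, zero_ne_one, one_ne_zero,
      not_false_eq_true]
  · linear_combination h₀ - k * u * hrxC
  · linear_combination h₁ - k * x * hrxC

lemma two_level_nonlinear_eigen {E0 A μ0 g1 g2 k r x S X : ℝ} (hD : g1 - g2 ≠ 0) (hX : X ≠ 0)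
    (hr : r ^ 2 = (μ0 - g2) / (g1 - g2)) (hx : x ^ 2 = (g1 - μ0) / (g1 - g2))
    (hSX : S ^ 2 + X ^ 2 = 1) (hk : k * X = (g1 - g2) * S)
    (hAx : A * x * X = (g1 - μ0) * r) (hAr : A * r * X = (μ0 - g2) * x) :
    ((E0 + k : ℝ) : ℂ) • ![r * (S - X * I), (x : ℂ)] =
      (!![(E0 : ℂ), A; A, E0] + I • ((μ0 : ℂ) • (1 : Matrix (Fin 2) (Fin 2) ℂ) +
        !![(-g1 : ℂ), 0; 0, -g2])) *ᵥ ![r * (S - X * I), (x : ℂ)] +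
      (k : ℂ) • diagonal ![(r : ℂ) ^ 2, (x : ℂ) ^ 2] *ᵥ ![r * (S - X * I), (x : ℂ)] := by
  have hrx : r ^ 2 + x ^ 2 = 1 := by rw [hr, hx]; field_simp; ring
  have hkx : k * x ^ 2 * X = (g1 - μ0) * S := by rw [mul_right_comm, hk, hx]; field_simp
  have hkr : k * r ^ 2 * X = (μ0 - g2) * S := by rw [mul_right_comm, hk, hr]; field_simp
  have hXC : (X : ℂ) ≠ 0 := ofReal_ne_zero.2 hX
  have hSXC : (S : ℂ) ^ 2 + (X : ℂ) ^ 2 = 1 := by exact_mod_cast hSX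
  have hkxC : (k : ℂ) * x ^ 2 * X = (g1 - μ0) * S := by exact_mod_cast hkx
  have hkrC : (k : ℂ) * r ^ 2 * X = (μ0 - g2) * S := by exact_mod_cast hkr
  have hAxC : (A : ℂ) * x * X = (g1 - μ0) * r := by exact_mod_cast hAx
  have hArC : (A : ℂ) * r * X = (μ0 - g2) * x := by exact_mod_cast hAr
  apply two_level_nonlinear_eigen_of_components hrx <;> apply mul_right_cancel₀ hXC
  · linear_combination r * (S - X * I) * hkxC - hAxC + (g1 - μ0) * r * hSXC -
      (g1 - μ0) * r * X ^ 2 * I_sq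
  · linear_combination x * hkrC - (S - X * I) * hArC

/-- Exact self-consistent oscillatory state of the nonlinear two-level system:
with `g₂ < μ₀ < g₁`, `X² < 1`, the vector `u₀ = (r e^{iφ}, x)` with the indicated
parameters has unit norm and solves the nonlinear eigenvalue problem with the real
eigenvalue `Ω = E₀ + a R²`. -/
theorem stmt_5 (E0 A μ0 g1 g2 a : ℝ) (hA : 0 < A) (ha : 0 < a)
    (h1 : g2 < μ0) (h2 : μ0 < g1)
    (X : ℝ) (hX : X = Real.sqrt ((g1 - μ0) * (μ0 - g2)) / A) (hX2 : X ^ 2 < 1) :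
    let r : ℝ := Real.sqrt ((μ0 - g2) / (g1 - g2))
    let x : ℝ := Real.sqrt ((g1 - μ0) / (g1 - g2))
    let φ : ℝ := -Real.arcsin X
    let R2 : ℝ := ((g1 - g2) / a) * Real.sqrt (1 / X ^ 2 - 1)
    let Ω : ℝ := E0 + a * R2
    let u0 : Fin 2 → ℂ := ![(r : ℂ) * Complex.exp (Complex.I * (φ : ℂ)), (x : ℂ)]
    let H : Matrix (Fin 2) (Fin 2) ℂ := !![(E0 : ℂ), (A : ℂ); (A : ℂ), (E0 : ℂ)]
    let G : Matrix (Fin 2) (Fin 2) ℂ := !![(-g1 : ℂ), 0; 0, (-g2 : ℂ)]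
    let L : Matrix (Fin 2) (Fin 2) ℂ :=
      H + Complex.I • ((μ0 : ℂ) • (1 : Matrix (Fin 2) (Fin 2) ℂ) + G)
    r ^ 2 + x ^ 2 = 1 ∧ ‖u0 0‖ ^ 2 + ‖u0 1‖ ^ 2 = 1 ∧
      (Ω : ℂ) • u0 = L.mulVec u0
        + ((a : ℂ) * (R2 : ℂ)) •
          (Matrix.diagonal ![((‖u0 0‖ : ℂ))^2, ((‖u0 1‖ : ℂ))^2]).mulVec u0 := by
  intro r x φ R2 Ω u0 H G L
  have hD : 0 < g1 - g2 := by linarith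
  have hX0 : 0 < X := by rw [hX]; exact div_pos (Real.sqrt_pos.2 (by nlinarith)) hA
  have hr2 : r ^ 2 = (μ0 - g2) / (g1 - g2) := Real.sq_sqrt (div_nonneg (by linarith) hD.le)
  have hx2 : x ^ 2 = (g1 - μ0) / (g1 - g2) := Real.sq_sqrt (div_nonneg (by linarith) hD.le)
  have hrx : r ^ 2 + x ^ 2 = 1 := by rw [hr2, hx2]; field_simp; ring
  have he : exp (I * φ) = √(1 - X ^ 2) - X * I :=
    exp_I_mul_neg_arcsin (by linarith) (by nlinarith)
  have hk : a * R2 * X = (g1 - g2) * √(1 - X ^ 2) := by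
    simp only [R2, Real.sqrt_one_div_sq_sub_one hX0]; field_simp
  have hS : √(1 - X ^ 2) ^ 2 + X ^ 2 = 1 := by rw [Real.sq_sqrt (by linarith)]; ring
  have hAX : A * X = √((g1 - μ0) * (μ0 - g2)) := by rw [hX]; field_simp
  have hAx : A * x * X = (g1 - μ0) * r := by
    rw [mul_right_comm, hAX, mul_comm _ x]
    exact Real.sqrt_div_mul_sqrt_mul (p := μ0 - g2) (by linarith) (by linarith) _
  have hAr : A * r * X = (μ0 - g2) * x := by
    rw [mul_right_comm, hAX, mul_comm _ r, mul_comm (g1 - μ0)]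
    exact Real.sqrt_div_mul_sqrt_mul (p := g1 - μ0) (by linarith) (by linarith) _
  have hn0 : ‖u0 0‖ = r := by simp [u0, r, norm_exp]
  have hn1 : ‖u0 1‖ = x := by simp [u0, x]
  refine ⟨hrx, by rw [hn0, hn1, hrx], ?_⟩
  rw [hn0, hn1, ← ofReal_mul]
  simp only [Ω, u0, H, G, L, he]
  exact two_level_nonlinear_eigen hD.ne' hX0.ne' hr2 hx2 hS hk hAx hAr
end

section
/- Let E0, A, μ0, g1, g2, a be real numbers with A > 0, a > 0, g2 < μ0 < g1, and X = √((g1 − μ0)(μ0 − g2))/A satisfying X² < 1; set r = √((μ0 − g2)/(g1 − g2)), φ = −arcsin(X), and R² = ((g1 − g2)/a)·√(1/X² − 1). Then the 4×4 real stability matrix M (defined in the context) has determinant zero: det M = 0. -/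
/-!
The system is invariant under a global phase rotation, so the tangent vector `iψ` to the orbit
of the oscillatory state `ψ = (r e^{iφ}, √(1 - r²))` lies in the kernel of the linearization
`M`. After substituting `sin 2φ`, `cos 2φ` and `R²`, the entries of `M` are polynomial in
`δ₁ = μ0 - g1`, `δ₂ = μ0 - g2`, `A`, `X` and `u = √(1/X² - 1)`, and checking `M (iψ) = 0`
only needs `X²(1 + u²) = 1` and `δ₁δ₂ + A²X² = 0`.
-/

open Matrix

open Real

theorem sin_two_mul_neg_arcsin {x : ℝ} (h₁ : -1 ≤ x) (h₂ : x ≤ 1) :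
    sin (2 * -arcsin x) = -(2 * x * √(1 - x ^ 2)) := by
  rw [mul_neg, sin_neg, sin_two_mul, sin_arcsin h₁ h₂, cos_arcsin]

theorem cos_two_mul_neg_arcsin {x : ℝ} (h₁ : -1 ≤ x) (h₂ : x ≤ 1) :
    cos (2 * -arcsin x) = 1 - 2 * x ^ 2 := by
  rw [mul_neg, cos_neg, cos_two_mul_eq_one_sub, sin_arcsin h₁ h₂]

theorem sqrt_one_sub_sq_eq_mul_sqrt {x : ℝ} (hx : 0 < x) :
    √(1 - x ^ 2) = x * √(1 / x ^ 2 - 1) := by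
  rw [← sqrt_sq hx.le, ← sqrt_mul (sq_nonneg x), sqrt_sq hx.le]
  congr 1
  field_simp

/-- The shape of the linearization `M`, with `P = aR²r²`, `Q = aR²(2r² - 1)`, `S = aR²(1 - r²)`,
`s = sin 2φ` and `c = cos 2φ`. -/
def stabilityMatrix (δ₁ δ₂ A P Q S s c : ℝ) : Matrix (Fin 4) (Fin 4) ℝ :=
  !![δ₁ + P * s, Q - P * c, 0, A;
    -Q - P * c, δ₁ - P * s, -A, 0;
    0, A, δ₂, -Q - S;
    -A, 0, Q - S, δ₂]

theorem det_stabilityMatrix_eq_zero {δ₁ δ₂ A X u : ℝ} (hA : A ≠ 0)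
    (hXu : X ^ 2 * (1 + u ^ 2) = 1) (hδ : δ₁ * δ₂ + A ^ 2 * X ^ 2 = 0) :
    (stabilityMatrix δ₁ δ₂ A (δ₂ * u) ((δ₁ + δ₂) * u) (-δ₁ * u)
      (-(2 * X ^ 2 * u)) (1 - 2 * X ^ 2)).det = 0 := by
  -- the phase mode `(-r sin φ, r cos φ, 0, √(1 - r²))`, rescaled by `√δ₂ √(g1 - g2) / X`
  refine exists_mulVec_eq_zero_iff.mp
    ⟨![δ₂, δ₂ * u, 0, A], fun h => hA (by simpa using congrFun h 3), ?_⟩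
  ext i
  fin_cases i <;> simp [stabilityMatrix, mulVec, dotProduct, Fin.sum_univ_four]
  · linear_combination (1 + u ^ 2) * hδ - A ^ 2 * hXu
  · linear_combination (2 * δ₂ ^ 2 * u) * hXu
  · ring
  · ring

theorem stmt_7_general (A μ0 g1 g2 a : ℝ) (hA : 0 < A) (ha : 0 < a)
    (h1 : g2 < μ0) (h2 : μ0 < g1)
    (X : ℝ) (hX : X = Real.sqrt ((g1 - μ0) * (μ0 - g2)) / A) (hX2 : X ^ 2 < 1) :
    let r : ℝ := Real.sqrt ((μ0 - g2) / (g1 - g2))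
    let φ : ℝ := -Real.arcsin X
    let R2 : ℝ := ((g1 - g2) / a) * Real.sqrt (1 / X ^ 2 - 1)
    let M : Matrix (Fin 4) (Fin 4) ℝ :=
      !![μ0 - g1 + a * R2 * r ^ 2 * Real.sin (2 * φ),
          a * R2 * (2 * r ^ 2 - 1) - a * R2 * r ^ 2 * Real.cos (2 * φ), 0, A;
        -(a * R2 * (2 * r ^ 2 - 1)) - a * R2 * r ^ 2 * Real.cos (2 * φ),
          μ0 - g1 - a * R2 * r ^ 2 * Real.sin (2 * φ), -A, 0;
        0, A, μ0 - g2, -(a * R2 * (2 * r ^ 2 - 1)) - a * R2 * (1 - r ^ 2);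
        -A, 0, a * R2 * (2 * r ^ 2 - 1) - a * R2 * (1 - r ^ 2), μ0 - g2]
    M.det = 0 := by
  intro r φ R2 M
  set u := √(1 / X ^ 2 - 1)
  have hAX : A * X = √((g1 - μ0) * (μ0 - g2)) := by rw [hX]; field_simp
  have hX0 : 0 < X := by
    rw [hX]; exact div_pos (sqrt_pos.mpr (mul_pos (by linarith) (by linarith))) hA
  have hX1 : X ≤ 1 := by nlinarith
  have hXu : X ^ 2 * (1 + u ^ 2) = 1 := by
    rw [sq_sqrt (by rw [sub_nonneg, le_div_iff₀ (by positivity)]; nlinarith)]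
    field_simp; ring
  have hδ : (μ0 - g1) * (μ0 - g2) + A ^ 2 * X ^ 2 = 0 := by
    rw [← mul_pow, hAX, sq_sqrt (mul_nonneg (by linarith) (by linarith))]; ring
  have hsin : sin (2 * φ) = -(2 * X ^ 2 * u) := by
    rw [sin_two_mul_neg_arcsin (by linarith) hX1, sqrt_one_sub_sq_eq_mul_sqrt hX0]; ring
  have hcos : cos (2 * φ) = 1 - 2 * X ^ 2 := cos_two_mul_neg_arcsin (by linarith) hX1
  have hr : r ^ 2 = (μ0 - g2) / (g1 - g2) := sq_sqrt (div_nonneg (by linarith) (by linarith))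
  have hg : g1 - g2 ≠ 0 := by linarith
  have hK : a * R2 = (g1 - g2) * u := by
    rw [show R2 = (g1 - g2) / a * u from rfl]; field_simp
  have hP : a * R2 * r ^ 2 = (μ0 - g2) * u := by rw [hK, hr]; field_simp
  have hQ : a * R2 * (2 * r ^ 2 - 1) = ((μ0 - g1) + (μ0 - g2)) * u := by
    rw [hK, hr]; field_simp; ring
  have hS : a * R2 * (1 - r ^ 2) = -(μ0 - g1) * u := by rw [hK, hr]; field_simp; ring
  change (stabilityMatrix (μ0 - g1) (μ0 - g2) A (a * R2 * r ^ 2) (a * R2 * (2 * r ^ 2 - 1))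
    (a * R2 * (1 - r ^ 2)) (sin (2 * φ)) (cos (2 * φ))).det = 0
  rw [hP, hQ, hS, hsin, hcos]
  exact det_stabilityMatrix_eq_zero hA.ne' hXu hδ

/-- The 4×4 real stability matrix `M` of the linearization about the exact
oscillatory state of the nonlinear two-level system has determinant zero. -/
theorem stmt_7 (E0 A μ0 g1 g2 a : ℝ) (hA : 0 < A) (ha : 0 < a)
    (h1 : g2 < μ0) (h2 : μ0 < g1)
    (X : ℝ) (hX : X = Real.sqrt ((g1 - μ0) * (μ0 - g2)) / A) (hX2 : X ^ 2 < 1) :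
    let r : ℝ := Real.sqrt ((μ0 - g2) / (g1 - g2))
    let φ : ℝ := -Real.arcsin X
    let R2 : ℝ := ((g1 - g2) / a) * Real.sqrt (1 / X ^ 2 - 1)
    let M : Matrix (Fin 4) (Fin 4) ℝ :=
      !![μ0 - g1 + a * R2 * r ^ 2 * Real.sin (2 * φ),
          a * R2 * (2 * r ^ 2 - 1) - a * R2 * r ^ 2 * Real.cos (2 * φ), 0, A;
        -(a * R2 * (2 * r ^ 2 - 1)) - a * R2 * r ^ 2 * Real.cos (2 * φ),
          μ0 - g1 - a * R2 * r ^ 2 * Real.sin (2 * φ), -A, 0;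
        0, A, μ0 - g2, -(a * R2 * (2 * r ^ 2 - 1)) - a * R2 * (1 - r ^ 2);
        -A, 0, a * R2 * (2 * r ^ 2 - 1) - a * R2 * (1 - r ^ 2), μ0 - g2]
    M.det = 0 :=
  stmt_7_general A μ0 g1 g2 a hA ha h1 h2 X hX hX2
end

section
/- Let E0, A, μ0, g1, g2, a be real numbers with A > 0, a > 0, g2 < μ0 < g1, and X = √((g1 − μ0)(μ0 − g2))/A satisfying X² < 1; set r = √((μ0 − g2)/(g1 − g2)), φ = −arcsin(X), and R² = ((g1 − g2)/a)·√(1/X² − 1). Then the coefficient of σ¹ in the characteristic polynomial det(σ·I₄ − M) of the 4×4 real stability matrix M (defined in the context) equals m₂ = 8A²(1 − X²)·(μ0 − (g1 + g2)/2). -/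
/-!
Only the principal `3 × 3` minors of `M` enter: for any `4 × 4` matrix, the `σ¹`-coefficient of
its characteristic polynomial is minus their sum. For `M = [[B, A J], [A J, D]]` with
`J = [[0, 1], [-1, 0]]` that sum is `det B · tr D + det D · tr B + A² · tr M`. On the oscillatory
state the trigonometric entries reduce to polynomials in `X` and `c = √(1/X² - 1)`, and the claim
becomes a polynomial identity modulo `X² c² = 1 - X²` and `A² X² = (g₁ - μ₀)(μ₀ - g₂)`.
-/

open Matrix

theorem Matrix.charpoly_coeff_one_eq_sum_det_submatrix_succAbove {R : Type*} [CommRing R] {n : ℕ}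
    (M : Matrix (Fin (n + 1)) (Fin (n + 1)) R) :
    M.charpoly.coeff 1 =
      (-1) ^ n * ∑ i : Fin (n + 1), (M.submatrix i.succAbove i.succAbove).det := by
  have h := M.charpoly_coeff_eq_sum_minors n (by simp)
  rw [Fintype.card_fin, Nat.add_sub_cancel_left] at h
  rw [h]
  congr 1
  symm
  refine Finset.sum_nbij (fun i => Finset.univ.erase i) ?_ ?_ ?_ ?_
  · intro i _
    simp [Finset.mem_powersetCard, Finset.card_erase_of_mem]
  · intro i _ j _ hij
    have : i ∉ Finset.univ.erase j := by simp only at hij; simp [← hij]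
    simpa using this
  · intro s hs
    obtain ⟨i, hi⟩ : ∃ i, sᶜ = {i} := Finset.card_eq_one.mp <| by
      simp [Finset.card_compl, (Finset.mem_powersetCard.mp hs).2]
    exact ⟨i, Finset.mem_coe.mpr (Finset.mem_univ i), by
      simp [← Finset.compl_singleton, ← hi]⟩
  · intro i _
    let e : Fin n ≃ Finset.univ.erase i :=
      (finSuccAboveEquiv i).trans (Equiv.subtypeEquivRight (by simp))
    rw [← det_submatrix_equiv_self e]
    rfl

theorem Matrix.charpoly_coeff_one_of_rotation_coupled {R : Type*} [CommRing R]
    (p q s t u v w z A : R) :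
    (!![p, q, 0, A; s, t, -A, 0; 0, A, u, v; -A, 0, w, z]).charpoly.coeff 1 =
      -((p * t - q * s) * (u + z) + (u * z - v * w) * (p + t) + A ^ 2 * (p + t + u + z)) := by
  rw [charpoly_coeff_one_eq_sum_det_submatrix_succAbove]
  simp [Fin.sum_univ_four, det_fin_three, Fin.succAbove]
  ring

namespace Real

theorem sin_two_mul_neg_arcsin {x : ℝ} (hx₁ : -1 ≤ x) (hx₂ : x ≤ 1) :
    sin (2 * -arcsin x) = -(2 * x * √(1 - x ^ 2)) := by
  rw [sin_two_mul, sin_neg, cos_neg, sin_arcsin hx₁ hx₂, cos_arcsin]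
  ring

theorem cos_two_mul_neg_arcsin {x : ℝ} (hx₁ : -1 ≤ x) (hx₂ : x ≤ 1) :
    cos (2 * -arcsin x) = 1 - 2 * x ^ 2 := by
  rw [cos_two_mul, cos_neg, cos_arcsin, sq_sqrt (by nlinarith)]
  ring

theorem mul_sqrt_one_div_sq_sub_one {x : ℝ} (hx : 0 < x) : x * √(1 / x ^ 2 - 1) = √(1 - x ^ 2) :=
  calc x * √(1 / x ^ 2 - 1) = √(x ^ 2 * (1 / x ^ 2 - 1)) := by
        rw [sqrt_mul (sq_nonneg x), sqrt_sq hx.le]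
    _ = √(1 - x ^ 2) := by
        congr 1
        field_simp

end Real

theorem stmt_8_general (A μ0 g1 g2 a : ℝ) (hA : 0 < A) (ha : 0 < a)
    (h1 : g2 < μ0) (h2 : μ0 < g1)
    (X : ℝ) (hX : X = Real.sqrt ((g1 - μ0) * (μ0 - g2)) / A) (hX2 : X ^ 2 < 1) :
    let r : ℝ := Real.sqrt ((μ0 - g2) / (g1 - g2))
    let φ : ℝ := -Real.arcsin X
    let R2 : ℝ := ((g1 - g2) / a) * Real.sqrt (1 / X ^ 2 - 1)
    let M : Matrix (Fin 4) (Fin 4) ℝ :=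
      !![μ0 - g1 + a * R2 * r ^ 2 * Real.sin (2 * φ),
          a * R2 * (2 * r ^ 2 - 1) - a * R2 * r ^ 2 * Real.cos (2 * φ), 0, A;
        -(a * R2 * (2 * r ^ 2 - 1)) - a * R2 * r ^ 2 * Real.cos (2 * φ),
          μ0 - g1 - a * R2 * r ^ 2 * Real.sin (2 * φ), -A, 0;
        0, A, μ0 - g2, -(a * R2 * (2 * r ^ 2 - 1)) - a * R2 * (1 - r ^ 2);
        -A, 0, a * R2 * (2 * r ^ 2 - 1) - a * R2 * (1 - r ^ 2), μ0 - g2]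
    M.charpoly.coeff 1 = 8 * A ^ 2 * (1 - X ^ 2) * (μ0 - (g1 + g2) / 2) := by
  intro r φ R2 M
  set c := √(1 / X ^ 2 - 1)
  have hX0 : 0 < X := hX ▸ div_pos (Real.sqrt_pos.mpr (by nlinarith)) hA
  have hX1 : X < 1 := by nlinarith
  have hXc : X * c = √(1 - X ^ 2) := Real.mul_sqrt_one_div_sq_sub_one hX0
  have hc2 : X ^ 2 * c ^ 2 = 1 - X ^ 2 := by
    rw [← mul_pow, hXc, Real.sq_sqrt (by nlinarith)]
  have hAX : A ^ 2 * X ^ 2 = (g1 - μ0) * (μ0 - g2) := by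
    rw [hX, div_pow, Real.sq_sqrt (by nlinarith)]
    field_simp
  have hr2 : r ^ 2 = (μ0 - g2) / (g1 - g2) :=
    Real.sq_sqrt (div_nonneg (by linarith) (by linarith))
  have hg : g1 - g2 ≠ 0 := by linarith
  have haR2 : a * R2 = (g1 - g2) * c := by
    change a * ((g1 - g2) / a * c) = _
    field_simp
  have hsin : Real.sin (2 * φ) = -(2 * X ^ 2 * c) := by
    rw [Real.sin_two_mul_neg_arcsin (by linarith) hX1.le, ← hXc]
    ring
  have hcos : Real.cos (2 * φ) = 1 - 2 * X ^ 2 :=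
    Real.cos_two_mul_neg_arcsin (by linarith) hX1.le
  have hsinTerm : a * R2 * r ^ 2 * Real.sin (2 * φ) = -2 * (μ0 - g2) * (1 - X ^ 2) := by
    rw [haR2, hr2, hsin, ← hc2]
    field_simp
  have hcosTerm : a * R2 * r ^ 2 * Real.cos (2 * φ) = (μ0 - g2) * (1 - 2 * X ^ 2) * c := by
    rw [haR2, hr2, hcos]
    field_simp
  have hsum : a * R2 * (2 * r ^ 2 - 1) = (2 * μ0 - g1 - g2) * c := by
    rw [haR2, hr2]
    field_simp
    ring
  have hdiff : a * R2 * (1 - r ^ 2) = (g1 - μ0) * c := by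
    rw [haR2, hr2]
    field_simp
    ring
  simp only [M]
  rw [charpoly_coeff_one_of_rotation_coupled, hsinTerm, hcosTerm, hsum, hdiff]
  refine mul_left_cancel₀ (pow_ne_zero 2 hX0.ne') ?_
  linear_combination
    (-2 * (μ0 - g2) * ((μ0 - g1) + 2 * (μ0 - g2) * X ^ 2)
        * ((μ0 - g1) + 2 * (μ0 - g2) * (1 - X ^ 2))
      - 2 * (μ0 - g1) * (μ0 - g2) * (2 * (μ0 - g1) + (μ0 - g2))) * hc2
    - (2 * μ0 - g1 - g2) * (6 - 4 * X ^ 2) * hAX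

/-- The coefficient of `σ¹` in the characteristic polynomial `det(σ I₄ - M)` of the
4×4 stability matrix `M` equals `m₂ = 8A²(1 - X²)(μ₀ - (g₁+g₂)/2)`. -/
theorem stmt_8 (E0 A μ0 g1 g2 a : ℝ) (hA : 0 < A) (ha : 0 < a)
    (h1 : g2 < μ0) (h2 : μ0 < g1)
    (X : ℝ) (hX : X = Real.sqrt ((g1 - μ0) * (μ0 - g2)) / A) (hX2 : X ^ 2 < 1) :
    let r : ℝ := Real.sqrt ((μ0 - g2) / (g1 - g2))
    let φ : ℝ := -Real.arcsin X
    let R2 : ℝ := ((g1 - g2) / a) * Real.sqrt (1 / X ^ 2 - 1)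
    let M : Matrix (Fin 4) (Fin 4) ℝ :=
      !![μ0 - g1 + a * R2 * r ^ 2 * Real.sin (2 * φ),
          a * R2 * (2 * r ^ 2 - 1) - a * R2 * r ^ 2 * Real.cos (2 * φ), 0, A;
        -(a * R2 * (2 * r ^ 2 - 1)) - a * R2 * r ^ 2 * Real.cos (2 * φ),
          μ0 - g1 - a * R2 * r ^ 2 * Real.sin (2 * φ), -A, 0;
        0, A, μ0 - g2, -(a * R2 * (2 * r ^ 2 - 1)) - a * R2 * (1 - r ^ 2);
        -A, 0, a * R2 * (2 * r ^ 2 - 1) - a * R2 * (1 - r ^ 2), μ0 - g2]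
    M.charpoly.coeff 1 = 8 * A ^ 2 * (1 - X ^ 2) * (μ0 - (g1 + g2) / 2) :=
  stmt_8_general A μ0 g1 g2 a hA ha h1 h2 X hX hX2
end

section
/- Let γ, μ2, χ ∈ ℂ with γ ≠ 0 and χ⁴ = μ2/(2γ), let U, μ0 ∈ ℝ, and let n ∈ ℕ. Define ψₙ : ℝ → ℂ by ψₙ(x) = exp( (U/(2γ))·x − χ²·x²/2 ) · Heₙ(√2·χ·x), where Heₙ is the n-th probabilists' Hermite polynomial evaluated over ℂ. Then for all x ∈ ℝ, −iU·ψₙ'(x) + iγ·ψₙ''(x) − (i/2)·μ2·x²·ψₙ(x) + i·μ0·ψₙ(x) = ωₙ·ψₙ(x), where ωₙ = i·(μ0 − U²/(4γ) − (2n+1)·γ·χ²). -/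
/-!
Write `ψ = exp q · p` with the polynomials `q = a x - χ² x² / 2` (where `a = U / (2γ)`) and
`p = Heₙ(s x)` (where `s = √2 χ`). Differentiation acts on such products through
`p ↦ q' p + p'`, so the eigenvalue equation becomes a polynomial identity. It follows
from Hermite's equation `Heₙ'' = y Heₙ' - n Heₙ` together with `s² = 2χ²`, `μ₂ = 2γχ⁴`
and `U = 2γa`.
-/

open Complex Polynomial

theorem derivative_hermite_succ (n : ℕ) :
    derivative (hermite (n + 1)) = ((n + 1 : ℕ) : ℤ[X]) * hermite n := by
  induction n with
  | zero => simp
  | succ n ih =>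
    rw [hermite_succ (n + 1), derivative_sub, derivative_mul, derivative_X, ih, hermite_succ n,
      derivative_natCast_mul]
    push_cast
    ring

theorem derivative_derivative_hermite (n : ℕ) :
    derivative (derivative (hermite n)) =
      X * derivative (hermite n) - (n : ℤ[X]) * hermite n := by
  cases n with
  | zero => simp
  | succ n =>
    rw [derivative_hermite_succ, derivative_natCast_mul, hermite_succ n]
    ring

theorem hasDerivAt_cexp_eval_mul_eval (q p : ℂ[X]) (z : ℂ) :
    HasDerivAt (fun z => cexp (q.eval z) * p.eval z)
      (cexp (q.eval z) * (derivative q * p + derivative p).eval z) z :=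
  ((q.hasDerivAt z).cexp.mul (p.hasDerivAt z)).congr_deriv <| by
    rw [eval_add, eval_mul]
    ring

theorem deriv_cexp_eval_mul_eval_ofReal (q p : ℂ[X]) :
    deriv (fun x : ℝ => cexp (q.eval (x : ℂ)) * p.eval (x : ℂ)) =
      fun x : ℝ => cexp (q.eval (x : ℂ)) * (derivative q * p + derivative p).eval (x : ℂ) :=
  funext fun x => (hasDerivAt_cexp_eval_mul_eval q p x).comp_ofReal.deriv

/-- The functions `ψₙ(x) = exp((U/(2γ))x - χ²x²/2) Heₙ(√2 χ x)`, with `χ⁴ = μ₂/(2γ)`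
and `Heₙ` the probabilists' Hermite polynomial, are eigenfunctions of the linear
inhomogeneous complex Ginzburg–Landau operator with eigenvalues
`ωₙ = i(μ₀ - U²/(4γ) - (2n+1)γχ²)`. -/
theorem stmt_13 (γ μ2 χ : ℂ) (hγ : γ ≠ 0) (hχ : χ ^ 4 = μ2 / (2 * γ)) (U μ0 : ℝ)
    (n : ℕ) (ψ : ℝ → ℂ)
    (hψ : ∀ x : ℝ, ψ x =
      Complex.exp (((U : ℂ) / (2 * γ)) * (x : ℂ) - χ ^ 2 * (x : ℂ) ^ 2 / 2) *
        Polynomial.aeval ((Real.sqrt 2 : ℂ) * χ * (x : ℂ)) (Polynomial.hermite n)) :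
    ∀ x : ℝ,
      -Complex.I * (U : ℂ) * deriv ψ x + Complex.I * γ * deriv (deriv ψ) x
        - (Complex.I / 2) * μ2 * (x : ℂ) ^ 2 * ψ x + Complex.I * (μ0 : ℂ) * ψ x
      = (Complex.I * ((μ0 : ℂ) - (U : ℂ) ^ 2 / (4 * γ) - (2 * (n : ℂ) + 1) * γ * χ ^ 2))
          * ψ x := by
  set a : ℂ := (U : ℂ) / (2 * γ)
  set s : ℂ := (Real.sqrt 2 : ℂ) * χ
  set H : ℂ[X] := (hermite n).map (algebraMap ℤ ℂ)
  set q : ℂ[X] := C a * X - C (χ ^ 2 / 2) * X ^ 2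
  have hψ_eq :
      ψ = fun x : ℝ => cexp (q.eval (x : ℂ)) * (H.comp (C s * X)).eval (x : ℂ) := by
    funext x
    rw [hψ, aeval_def, eval₂_eq_eval_map]
    simp only [q, H, eval_comp, eval_sub, eval_mul, eval_C, eval_X, eval_pow]
    ring_nf
  have hH : derivative (derivative H) = X * derivative H - (n : ℂ[X]) * H := by
    simpa [H, derivative_map] using
      congrArg (map (algebraMap ℤ ℂ)) (derivative_derivative_hermite n)
  have hs : s ^ 2 = 2 * χ ^ 2 := by
    rw [mul_pow, ← ofReal_pow, Real.sq_sqrt zero_le_two, ofReal_ofNat]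
  have hU : (U : ℂ) = 2 * γ * a := by simp only [a]; field_simp
  have hU2 : (U : ℂ) ^ 2 / (4 * γ) = γ * a ^ 2 := by rw [hU]; field_simp; ring
  have hμ2 : μ2 = 2 * γ * χ ^ 4 := by rw [hχ]; field_simp
  intro x
  rw [hψ_eq, deriv_cexp_eval_mul_eval_ofReal, deriv_cexp_eval_mul_eval_ofReal]
  simp only [q, derivative_add, derivative_sub, derivative_mul, derivative_comp, derivative_C,
    derivative_X, derivative_X_pow, derivative_zero, derivative_one, hH, eval_add, eval_sub,
    eval_mul, eval_comp, eval_C, eval_X, eval_pow, eval_natCast, eval_zero, eval_one]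
  rw [hU2, hU, hμ2]
  clear_value a s
  linear_combination (I * γ * cexp (a * x - χ ^ 2 / 2 * x ^ 2) *
    (s * x * eval (s * x) (derivative H) - n * eval (s * x) H)) * hs
end

section
/- Let γᵣ > 0, μ2ᵣ > 0 and μ0 be real numbers, and let u : ℝ → ℂ be continuously differentiable with compact support and not identically zero. Suppose u satisfies the global-mode stationarity condition μ0 · ∫ℝ |u(x)|² dx = γᵣ · ∫ℝ |u'(x)|² dx + (μ2ᵣ/2) · ∫ℝ x²·|u(x)|² dx (i.e., the real part of ⟨u, (μ0 + 𝓖)u⟩ vanishes, so that the L² norm of the corresponding solution is constant in time). Then μ0 ≥ √(μ2ᵣ·γᵣ/2). -/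
open MeasureTheory

/-!
Integrating by parts against `x` gives `∫ ‖u‖² = -∫ x (‖u‖²)' ≤ ∫ 2 |x| ‖u‖ ‖u'‖`, and the
pointwise AM-GM inequality `2 √(s t) |x| ‖u‖ ‖u'‖ ≤ s ‖u'‖² + t x² ‖u‖²` turns this into the
weighted uncertainty principle `√(s t) ∫ ‖u‖² ≤ s ∫ ‖u'‖² + t ∫ x² ‖u‖²`. With `s = γᵣ` and
`t = μ₂ᵣ / 2` the right-hand side is `μ₀ ∫ ‖u‖²` by the stationarity condition, and
`∫ ‖u‖² > 0` since `u` is continuous and nonzero.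
-/

theorem integral_eq_neg_integral_mul_deriv {f : ℝ → ℝ} (hf : ContDiff ℝ 1 f)
    (hsupp : HasCompactSupport f) :
    ∫ x, f x = -∫ x, x * deriv f x := by
  have hxf' : Integrable fun x => x * deriv f x :=
    (continuous_id.mul (hf.continuous_deriv le_rfl)).integrable_of_hasCompactSupport
      hsupp.deriv.mul_left
  have hf_int : Integrable f := hf.continuous.integrable_of_hasCompactSupport hsupp
  have hxf : Integrable fun x => x * f x :=
    (continuous_id.mul hf.continuous).integrable_of_hasCompactSupport hsupp.mul_left
  have hparts := integral_mul_deriv_eq_deriv_mul_of_integrable (u := id) (u' := fun _ => 1)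
    (v' := deriv f) (fun x _ => hasDerivAt_id x)
    (fun x _ => (hf.differentiable one_ne_zero x).hasDerivAt) hxf'
    (by simpa [Pi.mul_def] using hf_int) hxf
  simp only [id, one_mul] at hparts
  rw [hparts, neg_neg]

theorem HasCompactSupport.norm_sq {α E : Type*} [TopologicalSpace α] [SeminormedAddCommGroup E]
    {f : α → E} (hf : HasCompactSupport f) : HasCompactSupport fun x => ‖f x‖ ^ 2 :=
  hf.comp_left (g := fun z : E => ‖z‖ ^ 2) (by simp)

section

variable {E : Type*} [NormedAddCommGroup E] [InnerProductSpace ℝ E] {u : ℝ → E}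

theorem integral_norm_sq_le_integral_abs_mul_norm_mul_norm_deriv (hu : ContDiff ℝ 1 u)
    (hsupp : HasCompactSupport u) :
    ∫ x, ‖u x‖ ^ 2 ≤ ∫ x, 2 * (|x| * ‖u x‖ * ‖deriv u x‖) := by
  have hf := hu.norm_sq ℝ
  have hf_supp := hsupp.norm_sq
  have hderiv_le (x : ℝ) : |deriv (fun x => ‖u x‖ ^ 2) x| ≤ 2 * (‖u x‖ * ‖deriv u x‖) := by
    rw [((hu.differentiable one_ne_zero x).hasDerivAt.norm_sq).deriv, abs_mul, abs_two]
    gcongr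
    exact abs_real_inner_le_norm _ _
  rw [integral_eq_neg_integral_mul_deriv hf hf_supp]
  refine (neg_le_abs _).trans ((abs_integral_le_integral_abs).trans (integral_mono ?_ ?_ ?_))
  · exact ((continuous_id.mul (hf.continuous_deriv le_rfl)).integrable_of_hasCompactSupport
      hf_supp.deriv.mul_left).abs
  · exact (continuous_const.mul ((continuous_abs.mul hu.continuous.norm).mul
      (hu.continuous_deriv le_rfl).norm)).integrable_of_hasCompactSupport
      (hsupp.deriv.norm.mul_left.mul_left)
  · intro x
    dsimp only
    rw [abs_mul]
    calc |x| * |deriv (fun x => ‖u x‖ ^ 2) x| ≤ |x| * (2 * (‖u x‖ * ‖deriv u x‖)) := by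
          gcongr; exact hderiv_le x
      _ = 2 * (|x| * ‖u x‖ * ‖deriv u x‖) := by ring

theorem sqrt_mul_integral_norm_sq_le {s t : ℝ} (hs : 0 ≤ s) (ht : 0 ≤ t) (hu : ContDiff ℝ 1 u)
    (hsupp : HasCompactSupport u) :
    Real.sqrt (s * t) * ∫ x, ‖u x‖ ^ 2
      ≤ s * (∫ x, ‖deriv u x‖ ^ 2) + t * ∫ x, x ^ 2 * ‖u x‖ ^ 2 := by
  have hu_c := hu.continuous
  have hu'_c := hu.continuous_deriv le_rfl
  have hA : Integrable fun x => ‖deriv u x‖ ^ 2 :=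
    (hu'_c.norm.pow 2).integrable_of_hasCompactSupport hsupp.deriv.norm_sq
  have hB : Integrable fun x => x ^ 2 * ‖u x‖ ^ 2 :=
    ((continuous_id.pow 2).mul (hu_c.norm.pow 2)).integrable_of_hasCompactSupport
      hsupp.norm_sq.mul_left
  have hprod :
      Integrable fun x => 2 * (Real.sqrt s * ‖deriv u x‖) * (Real.sqrt t * (|x| * ‖u x‖)) :=
    ((continuous_const.mul (continuous_const.mul hu'_c.norm)).mul
      (continuous_const.mul (continuous_abs.mul hu_c.norm))).integrable_of_hasCompactSupport
      hsupp.norm.mul_left.mul_left.mul_left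
  calc Real.sqrt (s * t) * ∫ x, ‖u x‖ ^ 2
      ≤ Real.sqrt (s * t) * ∫ x, 2 * (|x| * ‖u x‖ * ‖deriv u x‖) :=
        mul_le_mul_of_nonneg_left
          (integral_norm_sq_le_integral_abs_mul_norm_mul_norm_deriv hu hsupp) (Real.sqrt_nonneg _)
    _ = ∫ x, 2 * (Real.sqrt s * ‖deriv u x‖) * (Real.sqrt t * (|x| * ‖u x‖)) := by
        rw [← integral_const_mul, Real.sqrt_mul hs]
        congr 1 with x
        ring
    _ ≤ ∫ x, ((Real.sqrt s * ‖deriv u x‖) ^ 2 + (Real.sqrt t * (|x| * ‖u x‖)) ^ 2) :=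
        integral_mono hprod ((hA.const_mul s).add (hB.const_mul t) |>.congr
          (Filter.Eventually.of_forall fun x => by
            simp only [Pi.add_apply, mul_pow, Real.sq_sqrt hs, Real.sq_sqrt ht, sq_abs]))
          fun x => two_mul_le_add_sq _ _
    _ = s * (∫ x, ‖deriv u x‖ ^ 2) + t * ∫ x, x ^ 2 * ‖u x‖ ^ 2 := by
        rw [← integral_const_mul, ← integral_const_mul, ← integral_add (hA.const_mul s)
          (hB.const_mul t)]
        congr 1 with x
        simp only [mul_pow, Real.sq_sqrt hs, Real.sq_sqrt ht, sq_abs]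

end

/-- Necessary condition for a global mode: if a nonzero compactly supported `C¹`
function satisfies the stationarity condition
`μ₀ ∫|u|² = γᵣ ∫|u'|² + (μ₂ᵣ/2) ∫ x²|u|²`, then `μ₀ ≥ √(μ₂ᵣ γᵣ/2)`. -/
theorem stmt_15 (γr μ2r μ0 : ℝ) (hγr : 0 < γr) (hμ2r : 0 < μ2r)
    (u : ℝ → ℂ) (hu : ContDiff ℝ 1 u) (hsupp : HasCompactSupport u) (hne : u ≠ 0)
    (heq : μ0 * (∫ x : ℝ, ‖u x‖ ^ 2)
      = γr * (∫ x : ℝ, ‖deriv u x‖ ^ 2)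
        + (μ2r / 2) * ∫ x : ℝ, x ^ 2 * ‖u x‖ ^ 2) :
    Real.sqrt (μ2r * γr / 2) ≤ μ0 := by
  obtain ⟨x₀, hx₀⟩ := Function.ne_iff.mp hne
  have hpos : 0 < ∫ x, ‖u x‖ ^ 2 :=
    (hu.continuous.norm.pow 2).integral_pos_of_hasCompactSupport_nonneg_nonzero
      hsupp.norm_sq (fun x => sq_nonneg _) (x := x₀) (by simpa using hx₀)
  have key := sqrt_mul_integral_norm_sq_le hγr.le (half_pos hμ2r).le hu hsupp
  rw [← heq, show γr * (μ2r / 2) = μ2r * γr / 2 by ring] at key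
  exact le_of_mul_le_mul_right key hpos
end
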